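/- For all indices a,b ∈ {0,1,2,3}, the entrywise complex conjugates of the matrices Σ_{L|ab} and Σ_{R|ab} satisfy (Σ_{L|ab})* = −Σ_{R|ab} and (Σ_{R|ab})* = −Σ_{L|ab}. -/

import Mathlib

noncomputable section

open Matrix Quaternion

/-- The basis `e_a = (i·1, e₁, e₂, e₃)` of the complexified quaternions `ℂ ⊗ ℍ`,
realized as quaternions with complex coefficients.  Here `e 0` is the complex
imaginary unit times the quaternion `1`, and `e 1, e 2, e 3` are the quaternion
imaginary units (satisfying `eᵢ eⱼ = -δᵢⱼ + εᵢⱼᵏ eₖ`). -/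
def e : Fin 4 → Quaternion ℂ
  | 0 => ⟨Complex.I, 0, 0, 0⟩
  | 1 => ⟨0, 1, 0, 0⟩
  | 2 => ⟨0, 0, 1, 0⟩
  | 3 => ⟨0, 0, 0, 1⟩

/-- The ℂ-bilinear inner product, defined by `2⟨x,y⟩ = x·ȳ + y·x̄` (a scalar in ℂ,
extracted as the real quaternion component).  Here `star` is quaternionic
conjugation, which is ℂ-linear on `Quaternion ℂ` (it fixes `re` and negates the
imaginary quaternion components). -/
def ip (x y : Quaternion ℂ) : ℂ := (x * star y + y * star x).re / 2

/-- `4i (Σ_{L|ab})_{cd} = ⟨e_a e_c, e_b e_d⟩ - ⟨e_a e_d, e_b e_c⟩`. -/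
def SigmaL (a b : Fin 4) : Matrix (Fin 4) (Fin 4) ℂ :=
  Matrix.of fun c d => (ip (e a * e c) (e b * e d) - ip (e a * e d) (e b * e c)) / (4 * Complex.I)

/-- `4i (Σ_{R|ab})_{cd} = ⟨e_c e_a, e_d e_b⟩ - ⟨e_d e_a, e_c e_b⟩`. -/
def SigmaR (a b : Fin 4) : Matrix (Fin 4) (Fin 4) ℂ :=
  Matrix.of fun c d => (ip (e c * e a) (e d * e b) - ip (e d * e a) (e c * e b)) / (4 * Complex.I)

/-!
Conjugating the complex coefficients of a quaternion is a ring automorphism of `ℍ[ℂ]` commuting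
with quaternionic conjugation, and it sends each basis vector `e a` to `-star (e a)`. Hence it maps
`e a * e c` to `star (e c * e a)`, while `⟨star x, star y⟩ = ⟨x, y⟩`; so complex conjugation
swaps the left and right inner products in the numerators, and `conj (4 i) = -4 i` gives the sign.
-/

namespace Quaternion

variable {R S : Type*} [CommRing R] [CommRing S]

def map (f : R →+* S) (x : ℍ[R]) : ℍ[S] := ⟨f x.re, f x.imI, f x.imJ, f x.imK⟩

variable (f : R →+* S) (x y : ℍ[R])

@[simp] theorem re_map : (map f x).re = f x.re := rfl
@[simp] theorem imI_map : (map f x).imI = f x.imI := rfl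
@[simp] theorem imJ_map : (map f x).imJ = f x.imJ := rfl
@[simp] theorem imK_map : (map f x).imK = f x.imK := rfl

theorem map_add : map f (x + y) = map f x + map f y := by
  ext <;> simp

theorem map_mul : map f (x * y) = map f x * map f y := by
  ext <;> simp [re_mul, imI_mul, imJ_mul, imK_mul]

theorem map_star : map f (star x) = star (map f x) := by
  ext <;> simp

theorem re_mul_comm : (x * y).re = (y * x).re := by
  simp only [re_mul]
  ring

end Quaternion

theorem conj_ip (x y : ℍ[ℂ]) :
    starRingEnd ℂ (ip x y) = ip (map (starRingEnd ℂ) x) (map (starRingEnd ℂ) y) := by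
  rw [ip, ip, ← Quaternion.map_star, ← Quaternion.map_star, ← Quaternion.map_mul,
    ← Quaternion.map_mul, ← Quaternion.map_add, re_map, map_div₀, map_ofNat]

theorem ip_star_star (x y : ℍ[ℂ]) : ip (star x) (star y) = ip x y := by
  rw [ip, ip, star_star, star_star, re_add, re_add, re_mul_comm (star x), re_mul_comm (star y),
    add_comm]

theorem map_conj_e (a : Fin 4) : map (starRingEnd ℂ) (e a) = -star (e a) := by
  ext <;> simp only [re_map, imI_map, imJ_map, imK_map, re_neg, imI_neg, imJ_neg, imK_neg,
    re_star, imI_star, imJ_star, imK_star] <;> fin_cases a <;> simp [e]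

theorem conj_ip_e_mul_e (a c b d : Fin 4) :
    starRingEnd ℂ (ip (e a * e c) (e b * e d)) = ip (e c * e a) (e d * e b) := by
  rw [conj_ip, Quaternion.map_mul, Quaternion.map_mul, map_conj_e, map_conj_e, map_conj_e,
    map_conj_e, neg_mul_neg, neg_mul_neg, ← star_mul, ← star_mul, ip_star_star]

/-- Eq. (10a): `(Σ_{L|ab})* = -Σ_{R|ab}` and `(Σ_{R|ab})* = -Σ_{L|ab}`
(entrywise complex conjugation). -/
theorem sigma_complex_conj (a b : Fin 4) :
    (SigmaL a b).map (starRingEnd ℂ) = -SigmaR a b ∧ (SigmaR a b).map (starRingEnd ℂ) = -SigmaL a b := by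
  constructor <;> ext c d <;>
    simp only [SigmaL, SigmaR, Matrix.map_apply, Matrix.of_apply, Matrix.neg_apply, map_div₀,
      map_sub, _root_.map_mul, Complex.conj_I, map_ofNat, conj_ip_e_mul_e, mul_neg, div_neg]
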